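/- Let A be a VRA such that for all c ∈ Σ_call and r ∈ Σ_ret, the union of the regular languages ⋃_{J ∈ Σ_proc^⟨c,r⟩} L_reg(A^J) equals (Σ_int ∪ Σ_proc)^*. Then for all c, r, the union of the recursive languages ⋃_{J ∈ Σ_proc^⟨c,r⟩} L(A^J) equals WM(Σ̂). -/

import Mathlib

/-!
A recursive run from empty stack to empty stack reads a well-matched word: each return pops
the state pushed by its matching call. Conversely, build a well-matched word from internal
words, brackets `call c · w · ret r` and concatenations. By induction, every such word `w` has
an abstraction `u` over `Σ_int ∪ Σ_proc` whose regular runs all lift to recursive runs on `w`: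
a bracket around `w` becomes a procedural symbol `J` linked to `(c, r)` whose regular language
contains the abstraction of `w`, and the covering hypothesis supplies such a `J`.
-/


/-- A symbol of a pushdown alphabet: internal, call, or return. -/
inductive VSym (I C R : Type) : Type
  | int  : I → VSym I C R
  | call : C → VSym I C R
  | ret  : R → VSym I C R

/-- The set of well-matched words over a pushdown alphabet. -/
inductive WellMatched {I C R : Type} : List (VSym I C R) → Prop
  | internal (u : List I) : WellMatched (u.map VSym.int)
  | bracket {w : List (VSym I C R)} (c : C) (r : R) :
      WellMatched w → WellMatched (VSym.call c :: w ++ [VSym.ret r])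
  | concat {w₁ w₂ : List (VSym I C R)} :
      WellMatched w₁ → WellMatched w₂ → WellMatched (w₁ ++ w₂)

def VSym.isCall {I C R : Type} : VSym I C R → Bool
  | .call _ => true
  | _ => false

def VSym.isRet {I C R : Type} : VSym I C R → Bool
  | .ret _ => true
  | _ => false

/-- The depth of a word: the maximal excess of call symbols over return symbols
in any prefix (the deepest level of unmatched calls at any point). -/
def VSym.depth {I C R : Type} (w : List (VSym I C R)) : ℕ :=
  (w.inits.map fun p => p.countP VSym.isCall - p.countP VSym.isRet).foldr max 0

/-- A visibly recursive automaton: a family of finite automata over the internal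
and procedural symbols, identified by the component map `comp` (`none` denotes the
starting automaton `A^S`, `some J` the component automaton `A^J`), together with a
linking function `link` assigning to each procedural symbol a call/return pair.
Transitions of each component automaton stay within that component. -/
structure VRA (I C R P Q : Type) where
  /-- the linking function `f : Σ_proc → Σ_call × Σ_ret` -/
  link : P → C × R
  /-- the component automaton each state belongs to (`none` = starting automaton) -/
  comp : Q → Option P
  init : Q → Prop
  final : Q → Prop
  intTrans : Q → I → Q → Prop
  procTrans : Q → P → Q → Prop
  intTrans_comp : ∀ ⦃q a p⦄, intTrans q a p → comp p = comp q
  procTrans_comp : ∀ ⦃q J p⦄, procTrans q J p → comp p = comp q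

namespace VRA

variable {I C R P Q : Type}

/-- One step of a recursive run, on configurations (state, stack of states). -/
inductive Step (A : VRA I C R P Q) : Q × List Q → VSym I C R → Q × List Q → Prop
  | int {q q' : Q} {σ : List Q} {a : I} :
      A.intTrans q a q' → Step A (q, σ) (VSym.int a) (q', σ)
  | call {q q' p : Q} {σ : List Q} {J : P} {c : C} :
      A.procTrans q J p → (A.link J).1 = c → A.comp q' = some J → A.init q' →
      Step A (q, σ) (VSym.call c) (q', p :: σ)
  | ret {q p : Q} {σ : List Q} {J : P} {r : R} :
      A.comp q = some J → A.final q → (A.link J).2 = r →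
      Step A (q, p :: σ) (VSym.ret r) (p, σ)

/-- Recursive runs of a VRA. -/
inductive Run (A : VRA I C R P Q) : Q × List Q → List (VSym I C R) → Q × List Q → Prop
  | nil (cfg : Q × List Q) : Run A cfg [] cfg
  | cons {cfg₁ cfg₂ cfg₃ : Q × List Q} {a : VSym I C R} {w : List (VSym I C R)} :
      Step A cfg₁ a cfg₂ → Run A cfg₂ w cfg₃ → Run A cfg₁ (a :: w) cfg₃

/-- The recursive language of the component automaton `A^J` (`J = none` is the
starting automaton): words with a recursive run from an initial state of the
component with empty stack to a final state of the component with empty stack. -/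
def RecLang (A : VRA I C R P Q) (J : Option P) : Set (List (VSym I C R)) :=
  {w | ∃ qi qf, A.comp qi = J ∧ A.init qi ∧ A.comp qf = J ∧ A.final qf ∧
    Run A (qi, []) w (qf, [])}

/-- The language of a VRA: the recursive language of its starting automaton. -/
def Lang (A : VRA I C R P Q) : Set (List (VSym I C R)) := A.RecLang none

/-- Regular runs: runs of the component automata viewed as ordinary finite
automata over the alphabet `Σ_int ∪ Σ_proc`. -/
inductive RegRun (A : VRA I C R P Q) : Q → List (I ⊕ P) → Q → Prop
  | nil (q : Q) : RegRun A q [] q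
  | int {q q' p : Q} {a : I} {w : List (I ⊕ P)} :
      A.intTrans q a q' → RegRun A q' w p → RegRun A q (Sum.inl a :: w) p
  | proc {q q' p : Q} {J : P} {w : List (I ⊕ P)} :
      A.procTrans q J q' → RegRun A q' w p → RegRun A q (Sum.inr J :: w) p

/-- The regular language of the component automaton `A^J`, over `Σ_int ∪ Σ_proc`. -/
def RegLang (A : VRA I C R P Q) (J : Option P) : Set (List (I ⊕ P)) :=
  {w | ∃ qi qf, A.comp qi = J ∧ A.init qi ∧ A.comp qf = J ∧ A.final qf ∧
    RegRun A qi w qf}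

/-- A VRA is codeterministic if component automata linked to the same call/return
pair have pairwise disjoint recursive languages. -/
def Codeterministic (A : VRA I C R P Q) : Prop :=
  ∀ J J' : P, J ≠ J' → A.link J = A.link J' →
    A.RecLang (some J) ∩ A.RecLang (some J') = ∅

/-- A VRA is complete if every state has an outgoing transition on every symbol of
`Σ_int ∪ Σ_proc`, and for every call/return pair the recursive languages of the
linked component automata cover all well-matched words. -/
def Complete (A : VRA I C R P Q) : Prop :=
  (∀ (q : Q) (a : I), ∃ p, A.intTrans q a p) ∧
  (∀ (q : Q) (J : P), ∃ p, A.procTrans q J p) ∧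
  (∀ (c : C) (r : R),
    (⋃ J ∈ {J : P | A.link J = (c, r)}, A.RecLang (some J)) = {w | WellMatched w})

/-- A VRA is deterministic if every component automaton (including the starting
one) has a unique initial state and deterministic transitions, and procedural
transitions from a common state on procedural symbols with the same call symbol
agree on the procedural symbol. -/
def Deterministic (A : VRA I C R P Q) : Prop :=
  (∀ J : Option P, ∃! q, A.comp q = J ∧ A.init q) ∧
  (∀ q a p p', A.intTrans q a p → A.intTrans q a p' → p = p') ∧
  (∀ q J p p', A.procTrans q J p → A.procTrans q J p' → p = p') ∧
  (∀ q J J' p p', A.procTrans q J p → A.procTrans q J' p' →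
    (A.link J).1 = (A.link J').1 → J = J')

/-- All component automata of the VRA are complete DFAs: a unique initial state in
each component and exactly one outgoing transition per state and symbol. -/
def AllCompleteDFA (A : VRA I C R P Q) : Prop :=
  (∀ J : Option P, ∃! q, A.comp q = J ∧ A.init q) ∧
  (∀ (q : Q) (a : I), ∃! p, A.intTrans q a p) ∧
  (∀ (q : Q) (J : P), ∃! p, A.procTrans q J p)

/-- The size of a VRA: number of states plus number of transitions. -/
noncomputable def size (A : VRA I C R P Q) : ℕ :=
  Nat.card Q + Nat.card {t : Q × I × Q // A.intTrans t.1 t.2.1 t.2.2}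
    + Nat.card {t : Q × P × Q // A.procTrans t.1 t.2.1 t.2.2}

end VRA

/-- Words of the form `v₀ (ret r₁) v₁ ⋯ (ret rₖ) vₖ` with every `vᵢ` well-matched: what a
recursive run that empties a stack of height `k` can read. -/
inductive PendingReturns {I C R : Type} : ℕ → List (VSym I C R) → Prop
  | zero {w : List (VSym I C R)} : WellMatched w → PendingReturns 0 w
  | succ {k : ℕ} {v w : List (VSym I C R)} (r : R) :
      WellMatched v → PendingReturns k w → PendingReturns (k + 1) (v ++ VSym.ret r :: w)

section WellMatched

variable {I C R : Type}

theorem WellMatched.nil : WellMatched ([] : List (VSym I C R)) := by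
  simpa using WellMatched.internal ([] : List I)

theorem PendingReturns.wellMatched_append {k : ℕ} {v w : List (VSym I C R)}
    (hv : WellMatched v) (hw : PendingReturns k w) : PendingReturns k (v ++ w) := by
  cases hw with
  | zero hw => exact .zero (hv.concat hw)
  | succ r hv' hw =>
    rw [← List.append_assoc]
    exact .succ r (hv.concat hv') hw

end WellMatched

namespace VRA

variable {I C R P Q : Type} {A : VRA I C R P Q}

theorem Run.append {cfg₁ cfg₂ cfg₃ : Q × List Q} {w₁ w₂ : List (VSym I C R)}
    (h₁ : A.Run cfg₁ w₁ cfg₂) (h₂ : A.Run cfg₂ w₂ cfg₃) : A.Run cfg₁ (w₁ ++ w₂) cfg₃ := by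
  induction h₁ with
  | nil => exact h₂
  | cons step _ ih => exact .cons step (ih h₂)

theorem RegRun.exists_of_append {u₁ u₂ : List (I ⊕ P)} {q q' : Q}
    (h : A.RegRun q (u₁ ++ u₂) q') : ∃ m, A.RegRun q u₁ m ∧ A.RegRun m u₂ q' := by
  induction u₁ generalizing q with
  | nil => exact ⟨q, .nil q, h⟩
  | cons a u ih =>
    cases h with
    | int ht hr => obtain ⟨m, h₁, h₂⟩ := ih hr; exact ⟨m, .int ht h₁, h₂⟩
    | proc ht hr => obtain ⟨m, h₁, h₂⟩ := ih hr; exact ⟨m, .proc ht h₁, h₂⟩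

theorem Run.pendingReturns {cfg cfg' : Q × List Q} {w : List (VSym I C R)}
    (h : A.Run cfg w cfg') (hend : cfg'.2 = []) : PendingReturns cfg.2.length w := by
  induction h with
  | nil => rw [hend]; exact .zero .nil
  | cons step _ ih =>
    have hw := ih hend
    cases step with
    | int _ => exact PendingReturns.wellMatched_append (.internal [_]) hw
    | @call _ _ _ _ _ c _ _ _ _ =>
      -- the matching return of `call c` is the first pending return of the remainder
      cases hw with
      | succ r hv hw => simpa using PendingReturns.wellMatched_append (hv.bracket c r) hw
    | ret _ _ _ => exact .succ _ .nil hw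

theorem wellMatched_of_mem_recLang {J : Option P} {w : List (VSym I C R)}
    (hw : w ∈ A.RecLang J) : WellMatched w := by
  obtain ⟨_, _, _, _, _, _, hrun⟩ := hw
  cases hrun.pendingReturns rfl with
  | zero hw => exact hw

def LiftsTo (A : VRA I C R P Q) (u : List (I ⊕ P)) (w : List (VSym I C R)) : Prop :=
  ∀ ⦃q q' : Q⦄ (σ : List Q), A.RegRun q u q' → A.Run (q, σ) w (q', σ)

theorem LiftsTo.mem_recLang {J : Option P} {u : List (I ⊕ P)} {w : List (VSym I C R)}
    (h : A.LiftsTo u w) (hu : u ∈ A.RegLang J) : w ∈ A.RecLang J := by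
  obtain ⟨qi, qf, hci, hii, hcf, hff, hrun⟩ := hu
  exact ⟨qi, qf, hci, hii, hcf, hff, h [] hrun⟩

theorem liftsTo_map_inl (us : List I) :
    A.LiftsTo (us.map Sum.inl) (us.map (VSym.int (C := C) (R := R))) := by
  induction us with
  | nil => rintro q q' σ ⟨⟩; exact .nil _
  | cons a us ih =>
    rintro q q' σ (_ | ⟨ht, hrun⟩)
    exact .cons (.int ht) (ih σ hrun)

theorem LiftsTo.append {u₁ u₂ : List (I ⊕ P)} {w₁ w₂ : List (VSym I C R)}
    (h₁ : A.LiftsTo u₁ w₁) (h₂ : A.LiftsTo u₂ w₂) : A.LiftsTo (u₁ ++ u₂) (w₁ ++ w₂) := by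
  intro q q' σ hrun
  obtain ⟨m, hrun₁, hrun₂⟩ := hrun.exists_of_append
  exact (h₁ σ hrun₁).append (h₂ σ hrun₂)

theorem LiftsTo.bracket {J : P} {c : C} {r : R} {u : List (I ⊕ P)} {w : List (VSym I C R)}
    (h : A.LiftsTo u w) (hJ : A.link J = (c, r)) (hu : u ∈ A.RegLang (some J)) : A.LiftsTo [Sum.inr J] (VSym.call c :: w ++ [VSym.ret r]) := by
  obtain ⟨qi, qf, hci, hii, hcf, hff, hrun⟩ := hu
  rintro q q' σ (_ | _ | ⟨ht, ⟨⟩⟩)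
  exact .cons (.call ht (by rw [hJ]) hci hii)
    ((h _ hrun).append (.cons (.ret hcf hff (by rw [hJ])) (.nil _)))

theorem exists_liftsTo_of_wellMatched
    (hcover : ∀ (c : C) (r : R) (u : List (I ⊕ P)),
      ∃ J, A.link J = (c, r) ∧ u ∈ A.RegLang (some J))
    {w : List (VSym I C R)} (hw : WellMatched w) : ∃ u, A.LiftsTo u w := by
  induction hw with
  | internal us => exact ⟨_, liftsTo_map_inl us⟩
  | bracket c r _ ih =>
    obtain ⟨u, hu⟩ := ih
    obtain ⟨J, hJ, hmem⟩ := hcover c r u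
    exact ⟨_, hu.bracket hJ hmem⟩
  | concat _ _ ih₁ ih₂ =>
    obtain ⟨u₁, hu₁⟩ := ih₁
    obtain ⟨u₂, hu₂⟩ := ih₂
    exact ⟨_, hu₁.append hu₂⟩

end VRA

/-- if, for each call/return pair, the regular languages of the
linked components cover `(Σ_int ∪ Σ_proc)^*`, then their recursive languages
cover `WM(Σ̂)`. -/
theorem VRA.recLang_cover_of_regLang_cover {I C R P Q : Type}
    (A : VRA I C R P Q)
    (hcover : ∀ (c : C) (r : R),
      (⋃ J ∈ {J : P | A.link J = (c, r)}, A.RegLang (some J)) = Set.univ) :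
    ∀ (c : C) (r : R),
      (⋃ J ∈ {J : P | A.link J = (c, r)}, A.RecLang (some J)) =
        {w : List (VSym I C R) | WellMatched w} := by
  have hreg (c : C) (r : R) (u : List (I ⊕ P)) :
      ∃ J, A.link J = (c, r) ∧ u ∈ A.RegLang (some J) := by
    simpa using (hcover c r).ge (Set.mem_univ u)
  intro c r
  ext w
  simp only [Set.mem_iUnion, Set.mem_ofPred_eq, exists_prop]
  refine ⟨fun ⟨_, _, hw⟩ => A.wellMatched_of_mem_recLang hw, fun hw => ?_⟩
  obtain ⟨u, hu⟩ := A.exists_liftsTo_of_wellMatched hreg hw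
  obtain ⟨J, hJ, hmem⟩ := hreg c r u
  exact ⟨J, hJ, hu.mem_recLang hmem⟩
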